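/- arXiv:2306.14094 — 4 statements merged into one kernel-verified Lean document; each statement's English description precedes it below -/
import Mathlib

section
/- For any reals r, v with r > 0, v > 0, r + v < 1, any λ₀ > 0, and any integer t ≥ 1, the sum ∑_{s=1}^{t} λ₀/((t-s+1)^v · (s+1)^r) is at most (2λ₀/(1-r-v)) · ((t+1)^{1-r-v} - 1). -/
/-! Both factors `k ↦ k ^ (-v)` and `k ↦ (k + 1) ^ (-r)` decrease, so by the rearrangement
inequality the reflected pairing of `t + 1 - s` with `s` is dominated by pairing `s` with itself.
Then `s ^ (-v) ≤ 2 (s + 1) ^ (-v)`, and by concavity of `y ↦ y ^ c` with `c = 1 - r - v` the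
resulting term `2 (s + 1) ^ (c - 1)` is at most `2 ((s + 1) ^ c - s ^ c) / c`, which telescopes. -/

open Finset Real

theorem MonovaryOn.sum_Icc_reflect_mul_le {α : Type*} [Semiring α] [LinearOrder α]
    [IsStrictOrderedRing α] [ExistsAddOfLE α] {f g : ℕ → α} {t : ℕ}
    (hfg : MonovaryOn f g (Icc 1 t)) :
    ∑ s ∈ Icc 1 t, f (t + 1 - s) * g s ≤ ∑ s ∈ Icc 1 t, f s * g s := by
  let σ : Equiv.Perm ℕ := Function.Involutive.toPerm
    (fun s => if s ∈ Icc 1 t then t + 1 - s else s)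
    (by intro s; simp only [mem_Icc]; split_ifs <;> omega)
  have hσ : {s | σ s ≠ s} ⊆ Icc 1 t := fun s hs => by
    by_contra h
    exact hs (if_neg h)
  calc ∑ s ∈ Icc 1 t, f (t + 1 - s) * g s = ∑ s ∈ Icc 1 t, f (σ s) * g s :=
        sum_congr rfl fun s hs => by rw [show σ s = t + 1 - s from if_pos hs]
    _ ≤ ∑ s ∈ Icc 1 t, f s * g s := hfg.sum_comp_perm_mul_le_sum_mul hσ

theorem Real.add_one_rpow_le_two_mul_rpow {x v : ℝ} (hx : 1 ≤ x) (hv0 : 0 ≤ v) (hv1 : v ≤ 1) :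
    (x + 1) ^ v ≤ 2 * x ^ v :=
  calc (x + 1) ^ v ≤ (2 * x) ^ v := rpow_le_rpow (by linarith) (by linarith) hv0
    _ = 2 ^ v * x ^ v := mul_rpow zero_le_two (by linarith)
    _ ≤ 2 ^ (1 : ℝ) * x ^ v := by gcongr; exact one_le_two
    _ = 2 * x ^ v := by rw [rpow_one]

/-- Bernoulli's inequality applied to `x / (x + 1) = 1 - (x + 1)⁻¹`. -/
theorem Real.mul_add_one_rpow_sub_one_le {x c : ℝ} (hx : 0 ≤ x) (hc0 : 0 ≤ c) (hc1 : c ≤ 1) :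
    c * (x + 1) ^ (c - 1) ≤ (x + 1) ^ c - x ^ c := by
  have hx1 : 0 < x + 1 := by linarith
  have hbern := rpow_one_add_le_one_add_mul_self (s := -(x + 1)⁻¹)
    (by rw [neg_le_neg_iff]; exact inv_le_one_of_one_le₀ (by linarith)) hc0 hc1
  have hfrac : 1 + -(x + 1)⁻¹ = x / (x + 1) := by field_simp; ring
  rw [hfrac, div_rpow hx hx1.le, div_le_iff₀ (rpow_pos_of_pos hx1 c)] at hbern
  rw [rpow_sub_one hx1.ne']
  linarith [show (1 + c * -(x + 1)⁻¹) * (x + 1) ^ c = (x + 1) ^ c - c * ((x + 1) ^ c / (x + 1))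
    by ring]

theorem Real.inv_rpow_mul_inv_add_one_rpow_le {x r v : ℝ} (hx : 1 ≤ x) (hr : 0 ≤ r) (hv : 0 ≤ v)
    (hrv : r + v < 1) :
    (x ^ v)⁻¹ * ((x + 1) ^ r)⁻¹ ≤
      2 / (1 - r - v) * ((x + 1) ^ (1 - r - v) - x ^ (1 - r - v)) := by
  have hx1 : 0 < x + 1 := by linarith
  have hc : 0 < 1 - r - v := by linarith
  have hv_inv : (x ^ v)⁻¹ ≤ 2 * ((x + 1) ^ v)⁻¹ := by
    rw [← div_eq_mul_inv, inv_eq_one_div,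
      div_le_div_iff₀ (rpow_pos_of_pos (by linarith) v) (rpow_pos_of_pos hx1 v)]
    linarith [add_one_rpow_le_two_mul_rpow hx hv (by linarith)]
  have hexp : ((x + 1) ^ v)⁻¹ * ((x + 1) ^ r)⁻¹ = (x + 1) ^ (1 - r - v - 1) := by
    rw [← mul_inv, ← rpow_add hx1, ← rpow_neg hx1.le]
    ring_nf
  have hincr := mul_add_one_rpow_sub_one_le (x := x) (by linarith) hc.le (by linarith)
  calc (x ^ v)⁻¹ * ((x + 1) ^ r)⁻¹ ≤ 2 * ((x + 1) ^ v)⁻¹ * ((x + 1) ^ r)⁻¹ := by gcongr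
    _ = 2 * (x + 1) ^ (1 - r - v - 1) := by rw [mul_assoc, hexp]
    _ ≤ 2 / (1 - r - v) * ((x + 1) ^ (1 - r - v) - x ^ (1 - r - v)) := by
      rw [div_mul_eq_mul_div, le_div_iff₀ hc]
      linarith

/-- Inequality (2T6ii):
`∑_{s=1}^{t} λ₀/((t-s+1)^v (s+1)^r) ≤ (2λ₀/(1-r-v)) ((t+1)^{1-r-v} - 1)`. -/
theorem stmt_4 (r v : ℝ) (hr : 0 < r) (hv : 0 < v) (hrv : r + v < 1)
    (lam0 : ℝ) (hlam0 : 0 < lam0) (t : ℕ) (ht : 1 ≤ t) :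
    ∑ s ∈ Finset.Icc 1 t,
        lam0 / (((t - s + 1 : ℕ) : ℝ) ^ v * ((s : ℝ) + 1) ^ r) ≤
      2 * lam0 / (1 - r - v) * (((t : ℝ) + 1) ^ (1 - r - v) - 1) := by
  set c := 1 - r - v
  set a : ℕ → ℝ := fun k => ((k : ℝ) ^ v)⁻¹
  set b : ℕ → ℝ := fun k => (((k : ℝ) + 1) ^ r)⁻¹
  have ha : AntitoneOn a (Icc 1 t) := fun i hi j _ hij => by
    have : (0 : ℝ) < i := by simp only [coe_Icc, Set.mem_Icc] at hi; exact_mod_cast hi.1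
    simp only [a]; gcongr
  have hb : AntitoneOn b (Icc 1 t) := fun i _ j _ hij => by simp only [b]; gcongr
  have htel : ∑ s ∈ Icc 1 t, (((s : ℝ) + 1) ^ c - (s : ℝ) ^ c) = ((t : ℝ) + 1) ^ c - 1 := by
    simpa using sum_Icc_sub ht (fun k : ℕ => (k : ℝ) ^ c)
  calc ∑ s ∈ Icc 1 t, lam0 / (((t - s + 1 : ℕ) : ℝ) ^ v * ((s : ℝ) + 1) ^ r)
        = lam0 * ∑ s ∈ Icc 1 t, a (t + 1 - s) * b s := by
          rw [mul_sum]
          refine sum_congr rfl fun s hs => ?_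
          rw [show t - s + 1 = t + 1 - s by simp only [mem_Icc] at hs; omega]
          simp only [a, b, div_eq_mul_inv, mul_inv]
    _ ≤ lam0 * ∑ s ∈ Icc 1 t, a s * b s :=
          mul_le_mul_of_nonneg_left (ha.monovaryOn hb).sum_Icc_reflect_mul_le hlam0.le
    _ ≤ lam0 * ∑ s ∈ Icc 1 t, 2 / c * (((s : ℝ) + 1) ^ c - (s : ℝ) ^ c) := by
          refine mul_le_mul_of_nonneg_left (sum_le_sum fun s hs => ?_) hlam0.le
          have hs1 : (1 : ℝ) ≤ s := by simp only [mem_Icc] at hs; exact_mod_cast hs.1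
          exact inv_rpow_mul_inv_add_one_rpow_le hs1 hr.le hv.le hrv
    _ = 2 * lam0 / c * (((t : ℝ) + 1) ^ c - 1) := by rw [← mul_sum, htel]; ring
end

section
/- For any reals r, v with 1/2 < v < 1, 0 < r, r + v < 1, and any integer t ≥ 1, it holds that ∑_{s=0}^{t-1} (s+1)^{r+1}/(t-s+1)^{1+v} ≤ (1/v) · ((t+1)^{r+1} - (t+1)^{-v}). -/
/-!
Bound each numerator `(s+1)^(r+1)` by `(t+1)^(r+1)`. After reversing the order of summation
what remains is `∑_{j<t} (j+2)^(-(1+v))`, and the tangent-line inequality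
`v (x+1)^(-(1+v)) ≤ x^(-v) - (x+1)^(-v)` for the convex function `x ↦ x^(-v)` makes
`v` times this sum telescope to at most `1 - (t+1)^(-v)`. Since `(t+1)^(r+1) ≥ 1`, the product
`(t+1)^(r+1) (1 - (t+1)^(-v))` is at most `(t+1)^(r+1) - (t+1)^(-v)`.
-/

open Real Finset

-- Multiplied out, this is Bernoulli's inequality `(1 + 1/x)^(1+v) ≥ 1 + (1+v)/x`.
lemma mul_rpow_neg_one_add_le_rpow_neg_sub_rpow_neg {v x : ℝ} (hv : 0 ≤ v) (hx : 0 < x) :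
    v * (x + 1) ^ (-(1 + v)) ≤ x ^ (-v) - (x + 1) ^ (-v) := by
  have hx1 : 0 < x + 1 := by linarith
  have bernoulli : 1 + (1 + v) * x⁻¹ ≤ (1 + x⁻¹) ^ (1 + v) :=
    one_add_mul_self_le_rpow_one_add (by linarith [inv_pos.2 hx]) (by linarith)
  rw [show 1 + x⁻¹ = (x + 1) / x by field_simp, div_rpow hx1.le hx.le,
    rpow_add hx, rpow_add hx1, rpow_one, rpow_one] at bernoulli
  rw [rpow_neg hx1.le, rpow_add hx1, rpow_one, rpow_neg hx.le, rpow_neg hx1.le]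
  have ha : 0 < x ^ v := rpow_pos_of_pos hx v
  have hb : 0 < (x + 1) ^ v := rpow_pos_of_pos hx1 v
  generalize x ^ v = a at *
  generalize (x + 1) ^ v = b at *
  rw [le_div_iff₀ (by positivity)] at bernoulli
  field_simp at bernoulli
  have : a⁻¹ - b⁻¹ - v * ((x + 1) * b)⁻¹ = ((x + 1) * b - (x + 1 + v) * a) / ((x + 1) * b * a) := by
    field_simp
    ring
  rw [← sub_nonneg, this]
  exact div_nonneg (by linarith) (by positivity)

lemma mul_sum_range_rpow_neg_le {v : ℝ} (hv : 0 ≤ v) (n : ℕ) :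
    v * ∑ j ∈ range n, ((j : ℝ) + 2) ^ (-(1 + v)) ≤ 1 - ((n : ℝ) + 1) ^ (-v) := by
  have telescope : ∑ j ∈ range n, (((j : ℝ) + 1) ^ (-v) - (((j + 1 : ℕ) : ℝ) + 1) ^ (-v))
      = 1 - ((n : ℝ) + 1) ^ (-v) := by
    rw [sum_range_sub' (fun j : ℕ ↦ ((j : ℝ) + 1) ^ (-v))]
    simp
  rw [mul_sum, ← telescope]
  refine sum_le_sum fun j _ ↦ ?_
  push_cast
  simpa only [add_assoc, one_add_one_eq_two] using
    mul_rpow_neg_one_add_le_rpow_neg_sub_rpow_neg hv (x := j + 1) (by positivity)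

theorem stmt_5_general (r v : ℝ) (hv : 1 / 2 < v) (hr : 0 < r) (t : ℕ) :
    ∑ s ∈ Finset.range t,
        ((s : ℝ) + 1) ^ (r + 1) / (((t - s + 1 : ℕ) : ℝ)) ^ (1 + v) ≤
      (1 / v) * (((t : ℝ) + 1) ^ (r + 1) - ((t : ℝ) + 1) ^ (-v)) := by
  have hv0 : 0 < v := by linarith
  set C := ((t : ℝ) + 1) ^ (r + 1)
  have hC : 1 ≤ C := one_le_rpow (by linarith [(t.cast_nonneg : (0 : ℝ) ≤ t)]) (by linarith)
  have numerator_le : ∀ s ∈ range t, ((s : ℝ) + 1) ^ (r + 1) / (((t - s + 1 : ℕ) : ℝ)) ^ (1 + v)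
      ≤ C * (((t - s + 1 : ℕ) : ℝ)) ^ (-(1 + v)) := by
    intro s hs
    rw [rpow_neg (Nat.cast_nonneg _), ← div_eq_mul_inv]
    have : (s : ℝ) ≤ t := by exact_mod_cast (mem_range.1 hs).le
    gcongr
    exact rpow_le_rpow (by positivity) (by linarith) (by linarith)
  have reflect : ∑ s ∈ range t, (((t - s + 1 : ℕ) : ℝ)) ^ (-(1 + v))
      = ∑ j ∈ range t, ((j : ℝ) + 2) ^ (-(1 + v)) := by
    rw [← sum_range_reflect]
    refine sum_congr rfl fun j hj ↦ ?_
    rw [show t - (t - 1 - j) + 1 = j + 2 by have := mem_range.1 hj; omega]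
    norm_cast
  have tail := mul_sum_range_rpow_neg_le hv0.le t
  have hX : 0 ≤ ((t : ℝ) + 1) ^ (-v) := by positivity
  rw [one_div, ← div_eq_inv_mul, le_div_iff₀ hv0]
  calc _ ≤ C * (v * ∑ j ∈ range t, ((j : ℝ) + 2) ^ (-(1 + v))) := by
        rw [← reflect, mul_sum, mul_sum, sum_mul]
        refine sum_le_sum fun s hs ↦ ?_
        exact (mul_le_mul_of_nonneg_right (numerator_le s hs) hv0.le).trans_eq (by ring)
    _ ≤ C * (1 - ((t : ℝ) + 1) ^ (-v)) := by gcongr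
    _ ≤ C - ((t : ℝ) + 1) ^ (-v) := by nlinarith

/-- Inequality (2T6vi1):
`∑_{s=0}^{t-1} (s+1)^{r+1}/(t-s+1)^{1+v} ≤ (1/v) ((t+1)^{r+1} - (t+1)^{-v})`. -/
theorem stmt_5 (r v : ℝ) (hv : 1 / 2 < v) (hv1 : v < 1) (hr : 0 < r)
    (hrv : r + v < 1) (t : ℕ) (ht : 1 ≤ t) :
    ∑ s ∈ Finset.range t,
        ((s : ℝ) + 1) ^ (r + 1) / (((t - s + 1 : ℕ) : ℝ)) ^ (1 + v) ≤
      (1 / v) * (((t : ℝ) + 1) ^ (r + 1) - ((t : ℝ) + 1) ^ (-v)) :=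
  stmt_5_general r v hv hr t
end

section
/- For any reals v ∈ (1/2, 1), r = (1-v)/2, λ₀ > 0, and any integer t ≥ 0, the sum ∑_{s=0}^{t} λ₀·(s+1)^{r+1}/((t+2)·(t-s+1)^{1+v}) is at most λ₀·(1/v + 1)·(t+1)^r. -/
/-!
Since `(s+1)^(r+1) ≤ (t+1)^(r+1) ≤ (t+1)^r (t+2)`, every summand is at most
`λ₀ (t+1)^r (t-s+1)^(-(1+v))`. After reflecting `s ↦ t - s`, the remaining sum
`∑_{j ≤ t} (j+1)^(-(1+v))` is its first term `1` plus a tail bounded by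
`∫₁^∞ x^(-(1+v)) dx = 1/v`.
-/

open Real Finset

lemma integral_rpow_neg_one_add_from_one_le {v : ℝ} (hv : 0 < v) {b : ℝ} (hb : 1 ≤ b) :
    ∫ x in (1 : ℝ)..b, x ^ (-(1 + v)) ≤ 1 / v := by
  have hzero : (0 : ℝ) ∉ Set.uIcc 1 b := by
    rw [Set.uIcc_of_le hb]; exact fun h ↦ by linarith [h.1]
  rw [integral_rpow (Or.inr ⟨by linarith, hzero⟩), show -(1 + v) + 1 = -v by ring, one_rpow,
    div_neg, ← neg_div, neg_sub, div_le_div_iff_of_pos_right hv]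
  linarith [rpow_nonneg (zero_le_one.trans hb) (-v)]

lemma sum_range_succ_rpow_neg_one_add_le {v : ℝ} (hv : 0 < v) (n : ℕ) :
    ∑ j ∈ range (n + 1), ((j : ℝ) + 1) ^ (-(1 + v)) ≤ 1 + 1 / v := by
  have hanti : AntitoneOn (fun x : ℝ ↦ x ^ (-(1 + v))) (Set.Icc 1 (1 + n)) :=
    (antitoneOn_rpow_Ioi_of_exponent_nonpos (by linarith)).mono
      fun x hx ↦ zero_lt_one.trans_le hx.1
  rw [sum_range_succ', Nat.cast_zero, zero_add, one_rpow, add_comm]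
  gcongr
  calc ∑ i ∈ range n, ((i + 1 : ℕ) + (1 : ℝ)) ^ (-(1 + v))
      = ∑ i ∈ range n, (1 + ((i + 1 : ℕ) : ℝ)) ^ (-(1 + v)) := by simp only [add_comm]
    _ ≤ ∫ x in (1 : ℝ)..1 + n, x ^ (-(1 + v)) := hanti.sum_le_integral
    _ ≤ 1 / v := integral_rpow_neg_one_add_from_one_le hv (by simp)

lemma sum_range_reflect_rpow_neg_one_add_le {v : ℝ} (hv : 0 < v) (t : ℕ) :
    ∑ s ∈ range (t + 1), (((t - s + 1 : ℕ) : ℝ)) ^ (-(1 + v)) ≤ 1 + 1 / v := by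
  have hreflect := sum_range_reflect (fun j ↦ (((j + 1 : ℕ) : ℝ)) ^ (-(1 + v))) (t + 1)
  simp only [add_tsub_cancel_right] at hreflect
  rw [hreflect]
  exact_mod_cast sum_range_succ_rpow_neg_one_add_le hv t

lemma add_one_rpow_add_one_le {s t r : ℝ} (hs : 0 ≤ s) (hst : s ≤ t) (hr : 0 ≤ r + 1) :
    (s + 1) ^ (r + 1) ≤ (t + 1) ^ r * (t + 2) :=
  calc (s + 1) ^ (r + 1) ≤ (t + 1) ^ (r + 1) := by gcongr
    _ = (t + 1) ^ r * (t + 1) := rpow_add_one (by linarith) r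
    _ ≤ (t + 1) ^ r * (t + 2) :=
      mul_le_mul_of_nonneg_left (by linarith) (rpow_nonneg (by linarith) r)

/-- Inequality (2T6vi2): with `r = (1-v)/2`,
`∑_{s=0}^{t} λ₀ (s+1)^{r+1}/((t+2)(t-s+1)^{1+v}) ≤ λ₀ (1/v + 1) (t+1)^r`. -/
theorem stmt_6 (v r : ℝ) (hv : 1 / 2 < v) (hv1 : v < 1)
    (hr : r = (1 - v) / 2) (lam0 : ℝ) (hlam0 : 0 < lam0) (t : ℕ) :
    ∑ s ∈ Finset.range (t + 1),
        lam0 * ((s : ℝ) + 1) ^ (r + 1) /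
          (((t : ℝ) + 2) * (((t - s + 1 : ℕ) : ℝ)) ^ (1 + v)) ≤
      lam0 * (1 / v + 1) * ((t : ℝ) + 1) ^ r := by
  have hv0 : 0 < v := by linarith
  have hr1 : 0 ≤ r + 1 := by rw [hr]; linarith
  calc ∑ s ∈ range (t + 1), lam0 * ((s : ℝ) + 1) ^ (r + 1) /
          (((t : ℝ) + 2) * (((t - s + 1 : ℕ) : ℝ)) ^ (1 + v))
      ≤ ∑ s ∈ range (t + 1),
          lam0 * ((t : ℝ) + 1) ^ r * (((t - s + 1 : ℕ) : ℝ)) ^ (-(1 + v)) := by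
        gcongr with s hs
        have hst : (s : ℝ) ≤ t := by exact_mod_cast Nat.lt_succ_iff.mp (mem_range.mp hs)
        calc _ = lam0 * (((s : ℝ) + 1) ^ (r + 1) / ((t : ℝ) + 2)) *
                (((t - s + 1 : ℕ) : ℝ)) ^ (-(1 + v)) := by
              rw [rpow_neg (Nat.cast_nonneg _), div_eq_mul_inv, div_eq_mul_inv, mul_inv]; ring
          _ ≤ _ := by
              gcongr
              exact div_le_of_le_mul₀ (by positivity) (by positivity)
                (add_one_rpow_add_one_le s.cast_nonneg hst hr1)
    _ = lam0 * ((t : ℝ) + 1) ^ r *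
          ∑ s ∈ range (t + 1), (((t - s + 1 : ℕ) : ℝ)) ^ (-(1 + v)) := by
        rw [mul_sum]
    _ ≤ lam0 * ((t : ℝ) + 1) ^ r * (1 + 1 / v) := by
        gcongr
        exact sum_range_reflect_rpow_neg_one_add_le hv0 t
    _ = lam0 * (1 / v + 1) * ((t : ℝ) + 1) ^ r := by ring
end

section
/- Suppose a nonnegative real sequence Δ_t satisfies Δ_{t+1} ≤ (1 - C₁/(t+1)^u)·Δ_t + C₀/(t+1)^{1+v} for all t ≥ T, where 0 < u < 1, v > u, C₀ > 0, C₁ > 0, and C₁/(t+1)^u < 1 for all t ≥ T. Then there exists a constant C₂ > 0 such that Δ_t ≤ C₂·C₀/(C₁·(t+1)^{1+v-u}) for all t ≥ 1. -/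
/-! With `w = 1 + v - u`, the sequence `M / (t + 1) ^ w` is a supersolution of the recursion
as soon as `(t + 1) ^ (1 - u) ≥ 2 w / C₁` and `M ≥ 2 C₀ / C₁`: by Bernoulli's inequality
`(x / (x + 1)) ^ w ≥ 1 - w / x`, so the contraction `C₁ / x ^ u` pays both for the loss `w / x` of the
decaying profile and for the forcing term `C₀ / x ^ (1 + v)`. Taking `M` also above `Δ t * (t + 1) ^ w`
on the finitely many initial indices, comparison gives `Δ t ≤ M / (t + 1) ^ w` for every `t`. -/

open Real Filter

lemma le_of_supersolution {f a b B : ℕ → ℝ} {N : ℕ} (hN : f N ≤ B N)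
    (ha : ∀ t ≥ N, 0 ≤ a t) (hf : ∀ t ≥ N, f (t + 1) ≤ a t * f t + b t)
    (hB : ∀ t ≥ N, a t * B t + b t ≤ B (t + 1)) :
    ∀ t ≥ N, f t ≤ B t := by
  intro t ht
  induction t, ht using Nat.le_induction with
  | base => exact hN
  | succ t ht ih =>
    calc f (t + 1) ≤ a t * f t + b t := hf t ht
      _ ≤ a t * B t + b t := by gcongr; exact ha t ht
      _ ≤ B (t + 1) := hB t ht

lemma one_sub_div_le_div_add_one_rpow {w x : ℝ} (hw : 1 ≤ w) (hx : 0 < x) :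
    1 - w / x ≤ (x / (x + 1)) ^ w := by
  have hx1 : 0 < x + 1 := by linarith
  have hs : -1 ≤ -1 / (x + 1) := by
    rw [neg_div, neg_le_neg_iff, div_le_one hx1]; linarith
  calc 1 - w / x ≤ 1 - w / (x + 1) := by gcongr; linarith
    _ = 1 + w * (-1 / (x + 1)) := by ring
    _ ≤ (1 + -1 / (x + 1)) ^ w := one_add_mul_self_le_rpow_one_add hs hw
    _ = (x / (x + 1)) ^ w := by congr 1; field_simp; ring

lemma rpow_supersolution_step {u w C0 C1 M x : ℝ} (hx : 0 < x) (hw : 1 ≤ w)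
    (hC1 : 0 < C1) (hM0 : 0 ≤ M) (hM : 2 * C0 / C1 ≤ M) (hxu : 2 * w / C1 ≤ x ^ (1 - u)) :
    (1 - C1 / x ^ u) * (M / x ^ w) + C0 / x ^ (u + w) ≤ M / (x + 1) ^ w := by
  have hP : 0 < x ^ u := rpow_pos_of_pos hx u
  have hQ : 0 < x ^ w := rpow_pos_of_pos hx w
  have hR : 0 < x ^ (1 - u) := rpow_pos_of_pos hx (1 - u)
  have hsplit : x ^ (1 - u) * x ^ u = x := by rw [← rpow_add hx]; simp
  have hdecay : M * w / x ^ (1 - u) ≤ M * C1 - C0 := by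
    rw [div_le_iff₀ hC1] at hM hxu
    rw [div_le_iff₀ hR]
    nlinarith [mul_le_mul_of_nonneg_left hxu hM0]
  have hbern : M * (1 - w / x) ≤ M * (x ^ w / (x + 1) ^ w) := by
    rw [← div_rpow hx.le (by linarith)]
    exact mul_le_mul_of_nonneg_left (one_sub_div_le_div_add_one_rpow hw hx) hM0
  calc (1 - C1 / x ^ u) * (M / x ^ w) + C0 / x ^ (u + w)
      = (M - (M * C1 - C0) / x ^ u) / x ^ w := by rw [rpow_add hx]; field_simp; ring
    _ ≤ (M - M * w / x ^ (1 - u) / x ^ u) / x ^ w := by gcongr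
    _ = M * (1 - w / x) / x ^ w := by rw [div_div, hsplit]; ring
    _ ≤ M / (x + 1) ^ w := by rw [div_le_iff₀ hQ, div_mul_eq_mul_div, mul_div_assoc]; exact hbern

theorem stmt_8_general (Δ : ℕ → ℝ)
    (u v C0 C1 : ℝ) (hu1 : u < 1) (hv : u < v)
    (hC0 : 0 < C0) (hC1 : 0 < C1) (T : ℕ)
    (hsmall : ∀ t ≥ T, C1 / ((t : ℝ) + 1) ^ u < 1)
    (hrec : ∀ t ≥ T,
      Δ (t + 1) ≤ (1 - C1 / ((t : ℝ) + 1) ^ u) * Δ t + C0 / ((t : ℝ) + 1) ^ (1 + v)) :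
    ∃ C2 : ℝ, 0 < C2 ∧ ∀ t : ℕ, 1 ≤ t →
      Δ t ≤ C2 * C0 / (C1 * ((t : ℝ) + 1) ^ (1 + v - u)) := by
  set w := 1 + v - u
  have hw : 1 ≤ w := by linarith
  have hgrowth : Tendsto (fun t : ℕ => ((t : ℝ) + 1) ^ (1 - u)) atTop atTop :=
    (tendsto_rpow_atTop (by linarith)).comp
      (tendsto_atTop_add_const_right _ 1 tendsto_natCast_atTop_atTop)
  obtain ⟨N, hN⟩ := eventually_atTop.mp
    ((eventually_ge_atTop T).and (hgrowth.eventually_ge_atTop (2 * w / C1)))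
  obtain ⟨M0, hM0⟩ := ((Set.Iic N).toFinite.image (fun t => Δ t * ((t : ℝ) + 1) ^ w)).bddAbove
  set M := max (2 * C0 / C1) M0
  have hM : 0 < M := lt_max_of_lt_left (by positivity)
  have hinit : ∀ t ≤ N, Δ t ≤ M / ((t : ℝ) + 1) ^ w := fun t ht => by
    rw [le_div_iff₀ (by positivity)]
    exact (hM0 ⟨t, ht, rfl⟩).trans (le_max_right _ _)
  have hbound : ∀ t, Δ t ≤ M / ((t : ℝ) + 1) ^ w := by
    intro t
    rcases le_total t N with ht | ht
    · exact hinit t ht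
    · refine le_of_supersolution (B := fun s => M / ((s : ℝ) + 1) ^ w) (hinit N le_rfl)
        (fun s hs => ?_) (fun s hs => hrec s (hN s hs).1) (fun s hs => ?_) t ht
      · linarith [hsmall s (hN s hs).1]
      · have hexp : 1 + v = u + w := by ring
        push_cast
        rw [hexp]
        exact rpow_supersolution_step (by positivity) hw hC1 hM.le (le_max_left _ _) (hN s hs).2
  refine ⟨M * C1 / C0, by positivity, fun t _ => ?_⟩
  calc Δ t ≤ M / ((t : ℝ) + 1) ^ w := hbound t
    _ = M * C1 / C0 * C0 / (C1 * ((t : ℝ) + 1) ^ w) := by field_simp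

/-- Sequence convergence lemma (Lemma 3) applied in the privacy analysis:
a nonnegative sequence satisfying the stated recursion for `t ≥ T` obeys
`Δ_t ≤ C₂ C₀ / (C₁ (t+1)^{1+v-u})` for all `t ≥ 1`, for some constant `C₂ > 0`. -/
theorem stmt_8 (Δ : ℕ → ℝ) (hΔ : ∀ t, 0 ≤ Δ t)
    (u v C0 C1 : ℝ) (hu0 : 0 < u) (hu1 : u < 1) (hv : u < v)
    (hC0 : 0 < C0) (hC1 : 0 < C1) (T : ℕ)
    (hsmall : ∀ t ≥ T, C1 / ((t : ℝ) + 1) ^ u < 1)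
    (hrec : ∀ t ≥ T,
      Δ (t + 1) ≤ (1 - C1 / ((t : ℝ) + 1) ^ u) * Δ t + C0 / ((t : ℝ) + 1) ^ (1 + v)) :
    ∃ C2 : ℝ, 0 < C2 ∧ ∀ t : ℕ, 1 ≤ t →
      Δ t ≤ C2 * C0 / (C1 * ((t : ℝ) + 1) ^ (1 + v - u)) :=
  stmt_8_general Δ u v C0 C1 hu1 hv hC0 hC1 T hsmall hrec
end
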